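/- For every periodic operator A and every integer k ≥ 1, lim_{n→∞} 2^{−n}·Tr(((A_n)ᴴ A_n)^k) = t((A*A)^k), where (A_n)ᴴ is the conjugate transpose of the matrix A_n and (A*A)^k is computed in the algebra of periodic operators. -/

import Mathlib

/-!
Everything is banded: `A` and its truncation to the block `[0, 2^n)²` have band width `2^m`, so
`(A_n)ᴴ A_n` agrees with `A*A` on every row at distance at least `2^(m+1)` from the edges of the
block, and by locality of banded products the `k`-th powers agree on the diagonal away from a
boundary layer whose width does not depend on `n`. Periodicity bounds all entries uniformly in
`n`, so the normalized traces differ from the diagonal average of `(A*A)^k` over `[0, 2^n)` by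
`O(2^-n)`; that average is the same for every period `2^n` of `(A*A)^k`.
-/

open Filter Topology Matrix

/-- A *periodic operator* is a function `A : ℤ × ℤ → ℂ` such that for some `n ≥ 1`,
`A(x,y) = 0` whenever `|x−y| > 2^n` and `A(x+2^n, y+2^n) = A(x,y)` for all `x, y ∈ ℤ`. -/
def IsPeriodicOp (A : ℤ → ℤ → ℂ) : Prop :=
  ∃ n : ℕ, 1 ≤ n ∧ (∀ x y : ℤ, |x - y| > 2 ^ n → A x y = 0) ∧
    (∀ x y : ℤ, A (x + 2 ^ n) (y + 2 ^ n) = A x y)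

/-- The product `(AB)(x,y) = ∑_z A(x,z)·B(z,y)` (a finite sum for periodic operators). -/
noncomputable def opMul (A B : ℤ → ℤ → ℂ) : ℤ → ℤ → ℂ := fun x y => ∑ᶠ z : ℤ, A x z * B z y

/-- The adjoint `A*(x,y) = conj (A(y,x))`. -/
def opAdj (A : ℤ → ℤ → ℂ) : ℤ → ℤ → ℂ := fun x y => starRingEnd ℂ (A y x)

/-- The identity operator `1(x,y) = δ_{x,y}`. -/
def opOne : ℤ → ℤ → ℂ := fun x y => if x = y then 1 else 0

/-- Powers in the algebra of periodic operators. -/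
noncomputable def opPow (A : ℤ → ℤ → ℂ) : ℕ → (ℤ → ℤ → ℂ)
  | 0 => opOne
  | k + 1 => opMul (opPow A k) A

/-- The truncation `A_n`, viewed as the `2^n × 2^n` matrix `(A(x,y))_{0 ≤ x,y ≤ 2^n−1}`. -/
noncomputable def trunc (A : ℤ → ℤ → ℂ) (n : ℕ) : Matrix (Fin (2 ^ n)) (Fin (2 ^ n)) ℂ :=
  fun i j => A ((i : ℕ) : ℤ) ((j : ℕ) : ℤ)

/-- The candidate value `t(B) = 2^{−n} ∑_{i=0}^{2^n−1} B(i,i)` computed with a given `n`. -/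
noncomputable def opTraceAt (B : ℤ → ℤ → ℂ) (n : ℕ) : ℂ :=
  (∑ i : Fin (2 ^ n), B ((i : ℕ) : ℤ) ((i : ℕ) : ℤ)) / 2 ^ n

open Finset

def IsBandedOp (r : ℕ) (F : ℤ → ℤ → ℂ) : Prop :=
  ∀ x y : ℤ, (r : ℤ) < |x - y| → F x y = 0

def IsShiftInvariantOp (P : ℤ) (F : ℤ → ℤ → ℂ) : Prop :=
  ∀ x y : ℤ, F (x + P) (y + P) = F x y

def opCut (N : ℕ) (F : ℤ → ℤ → ℂ) : ℤ → ℤ → ℂ := fun x y =>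
  if (0 ≤ x ∧ x < N) ∧ (0 ≤ y ∧ y < N) then F x y else 0

def RowsSupportedIn (N : ℕ) (F : ℤ → ℤ → ℂ) : Prop :=
  ∀ x y : ℤ, F x y ≠ 0 → 0 ≤ x ∧ x < N

section Banded

variable {r s : ℕ} {F G : ℤ → ℤ → ℂ}

lemma IsBandedOp.opAdj (hF : IsBandedOp r F) : IsBandedOp r (opAdj F) := fun x y h => by
  rw [_root_.opAdj, hF y x (by rwa [abs_sub_comm]), map_zero]

lemma isBandedOp_opOne : IsBandedOp 0 opOne := fun x y h =>
  if_neg (by rintro rfl; simp at h)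

lemma IsBandedOp.opMul (hF : IsBandedOp r F) (hG : IsBandedOp s G) :
    IsBandedOp (r + s) (_root_.opMul F G) := fun x y hxy =>
  finsum_eq_zero_of_forall_eq_zero fun z => by
    by_cases hxz : (r : ℤ) < |x - z|
    · rw [hF x z hxz, zero_mul]
    · rw [hG z y ?_, mul_zero]
      have := abs_sub_le x z y
      push_cast at hxy
      linarith

lemma IsBandedOp.opPow (hF : IsBandedOp r F) : ∀ k : ℕ, IsBandedOp (r * k) (_root_.opPow F k)
  | 0 => isBandedOp_opOne
  | k + 1 => by rw [mul_add_one]; exact (hF.opPow k).opMul hF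

lemma IsBandedOp.opCut (hF : IsBandedOp r F) (N : ℕ) : IsBandedOp r (_root_.opCut N F) :=
  fun x y h => by simp only [_root_.opCut, hF x y h, ite_self]

end Banded

section Bounds

lemma norm_finsum_le_of_support_near {h : ℤ → ℂ} {y : ℤ} {r : ℕ} {c : ℝ}
    (hsupp : ∀ z, h z ≠ 0 → |z - y| ≤ r) (hc : ∀ z, ‖h z‖ ≤ c) :
    ‖∑ᶠ z, h z‖ ≤ (2 * r + 1) * c := by
  have hsub : Function.support h ⊆ Icc (y - r) (y + r) := fun z hz => by
    have := abs_le.mp (hsupp z hz)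
    simp only [coe_Icc, Set.mem_Icc]
    constructor <;> linarith
  have hcard : #(Icc (y - r) (y + r)) = 2 * r + 1 := by rw [Int.card_Icc]; omega
  rw [finsum_eq_sum_of_support_subset h hsub]
  calc ‖∑ z ∈ Icc (y - r) (y + r), h z‖ ≤ ∑ z ∈ Icc (y - r) (y + r), ‖h z‖ := norm_sum_le _ _
    _ ≤ #(Icc (y - r) (y + r)) • c := sum_le_card_nsmul _ _ _ fun z _ => hc z
    _ = (2 * r + 1) * c := by rw [hcard, nsmul_eq_mul]; push_cast; ring

variable {r s : ℕ} {F G : ℤ → ℤ → ℂ} {C C' : ℝ}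

lemma norm_opMul_le (hF : ∀ x y, ‖F x y‖ ≤ C) (hG : IsBandedOp s G)
    (hG' : ∀ x y, ‖G x y‖ ≤ C') (x y : ℤ) : ‖opMul F G x y‖ ≤ (2 * s + 1) * (C * C') := by
  have hC : 0 ≤ C := (norm_nonneg _).trans (hF 0 0)
  refine norm_finsum_le_of_support_near (y := y) (fun z hz => ?_) fun z => ?_
  · by_contra h
    exact hz (by rw [hG z y (not_le.mp h), mul_zero])
  · rw [norm_mul]
    exact mul_le_mul (hF x z) (hG' z y) (norm_nonneg _) hC

lemma norm_opPow_le (hF : IsBandedOp r F) (hC : ∀ x y, ‖F x y‖ ≤ C) :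
    ∀ (k : ℕ) (x y : ℤ), ‖opPow F k x y‖ ≤ ((2 * r + 1) * C) ^ k
  | 0, x, y => by
    simp only [opPow, opOne, pow_zero]
    split_ifs <;> simp
  | k + 1, x, y => (norm_opMul_le (norm_opPow_le hF hC k) hF hC x y).trans_eq (by ring)

lemma IsBandedOp.exists_norm_le {P : ℤ} (hF : IsBandedOp r F) (hFP : IsShiftInvariantOp P F)
    (hP : 0 < P) : ∃ C, ∀ x y, ‖F x y‖ ≤ C := by
  refine ⟨∑ p ∈ Ico 0 P ×ˢ Icc (-(r : ℤ)) r, ‖F p.1 (p.1 + p.2)‖, fun x y => ?_⟩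
  by_cases hxy : (r : ℤ) < |x - y|
  · rw [hF x y hxy, norm_zero]
    exact sum_nonneg fun _ _ => norm_nonneg _
  · -- `F x y` depends only on `x % P` and `y - x`
    have hdiag : Function.Periodic (fun u => F u (u + (y - x))) P := fun u => by
      simp only [add_right_comm u P]
      exact hFP _ _
    have hx : F x y = F (x % P) (x % P + (y - x)) := by
      have := hdiag.int_mul (x / P) (x % P)
      simpa only [Int.cast_id, Int.emod_add_ediv_mul, add_sub_cancel] using this
    rw [hx]
    refine single_le_sum (f := fun p : ℤ × ℤ => ‖F p.1 (p.1 + p.2)‖)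
      (fun _ _ => norm_nonneg _) (show (x % P, y - x) ∈ _ from ?_)
    have := abs_le.mp (not_lt.mp hxy)
    simp only [mem_product, mem_Ico, mem_Icc]
    exact ⟨⟨Int.emod_nonneg _ hP.ne', Int.emod_lt_of_pos _ hP⟩, by linarith, by linarith⟩

end Bounds

section ShiftInvariant

variable {P : ℤ} {F G : ℤ → ℤ → ℂ}

lemma IsShiftInvariantOp.opMul (hF : IsShiftInvariantOp P F) (hG : IsShiftInvariantOp P G) :
    IsShiftInvariantOp P (_root_.opMul F G) := fun x y => by
  rw [_root_.opMul, _root_.opMul, ← finsum_comp_equiv (Equiv.addRight P)]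
  exact finsum_congr fun z => by rw [Equiv.coe_addRight, hF, hG]

lemma IsShiftInvariantOp.opAdj (hF : IsShiftInvariantOp P F) :
    IsShiftInvariantOp P (_root_.opAdj F) := fun x y => by
  rw [_root_.opAdj, _root_.opAdj, hF]

lemma isShiftInvariantOp_opOne : IsShiftInvariantOp P opOne := fun x y => by
  simp only [opOne, add_left_inj]

lemma IsShiftInvariantOp.opPow (hF : IsShiftInvariantOp P F) :
    ∀ k : ℕ, IsShiftInvariantOp P (_root_.opPow F k)
  | 0 => isShiftInvariantOp_opOne
  | k + 1 => (hF.opPow k).opMul hF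

end ShiftInvariant

section Locality

variable {r : ℕ} {F F' G G' : ℤ → ℤ → ℂ}

lemma opMul_apply_congr {x y : ℤ} (hF : IsBandedOp r F) (hFF' : ∀ z, F x z = F' x z)
    (hGG' : ∀ z, |x - z| ≤ r → G z y = G' z y) : opMul F G x y = opMul F' G' x y :=
  finsum_congr fun z => by
    by_cases hxz : (r : ℤ) < |x - z|
    · rw [← hFF', hF x z hxz, zero_mul, zero_mul]
    · rw [← hFF', hGG' z (not_lt.mp hxz)]

lemma opPow_apply_congr (hF : IsBandedOp r F) :
    ∀ (k : ℕ) {x : ℤ}, (∀ z, |x - z| ≤ ((r * k : ℕ) : ℤ) → ∀ y, F z y = F' z y) →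
      ∀ y, opPow F k x y = opPow F' k x y
  | 0, _, _, _ => rfl
  | k + 1, x, h, y =>
    have hk : ((r * k : ℕ) : ℤ) ≤ ((r * (k + 1) : ℕ) : ℤ) := by
      exact_mod_cast Nat.mul_le_mul_left r k.le_succ
    opMul_apply_congr (hF.opPow k) (opPow_apply_congr hF k fun z hz => h z (hz.trans hk))
      fun z hz => h z (hz.trans hk) y

variable {N : ℕ} {x : ℤ}

lemma opCut_apply_of_interior (hF : IsBandedOp r F) (hx : r ≤ x ∧ x + r < N) (y : ℤ) :
    opCut N F x y = F x y := by
  by_cases hxy : (r : ℤ) < |x - y|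
  · rw [hF.opCut N x y hxy, hF x y hxy]
  · have := abs_le.mp (not_lt.mp hxy)
    exact if_pos (by omega)

lemma opAdj_opCut_apply_of_interior (hF : IsBandedOp r F) (hx : r ≤ x ∧ x + r < N) (y : ℤ) :
    opAdj (opCut N F) x y = opAdj F x y := by
  by_cases hxy : (r : ℤ) < |x - y|
  · rw [(hF.opCut N).opAdj x y hxy, hF.opAdj x y hxy]
  · have := abs_le.mp (not_lt.mp hxy)
    exact congrArg (starRingEnd ℂ) (if_pos (by omega))

lemma opMul_opAdj_opCut_apply_of_interior (hF : IsBandedOp r F)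
    (hx : ((r + r : ℕ) : ℤ) ≤ x ∧ x + (r + r : ℕ) < N) (y : ℤ) :
    opMul (opAdj (opCut N F)) (opCut N F) x y = opMul (opAdj F) F x y :=
  opMul_apply_congr (hF.opCut N).opAdj (opAdj_opCut_apply_of_interior hF (by omega))
    fun z hz => opCut_apply_of_interior hF (by have := abs_le.mp hz; omega) y

end Locality

section Truncation

lemma finsum_eq_sum_fin {N : ℕ} {h : ℤ → ℂ} (hh : ∀ z, h z ≠ 0 → 0 ≤ z ∧ z < N) :
    ∑ᶠ z, h z = ∑ i : Fin N, h i := by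
  have hsub : Function.support h ⊆
      ↑((univ : Finset (Fin N)).map (Fin.valEmbedding.trans (Nat.castEmbedding (R := ℤ)))) :=
    fun z hz => by
      have := hh z hz
      simp only [coe_map, coe_univ, Set.image_univ, Set.mem_range]
      exact ⟨⟨z.toNat, by omega⟩, Int.toNat_of_nonneg this.1⟩
  rw [finsum_eq_sum_of_support_subset h hsub, sum_map]
  rfl

variable {N n : ℕ} {F G : ℤ → ℤ → ℂ}

lemma rowsSupportedIn_opCut (N : ℕ) (F : ℤ → ℤ → ℂ) : RowsSupportedIn N (opCut N F) :=
  fun x y h => by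
    unfold opCut at h
    split_ifs at h with hxy
    · exact hxy.1
    · exact absurd rfl h

lemma rowsSupportedIn_opAdj_opCut (N : ℕ) (F : ℤ → ℤ → ℂ) :
    RowsSupportedIn N (opAdj (opCut N F)) :=
  fun x y h => by
    unfold opAdj opCut at h
    split_ifs at h with hxy
    · exact hxy.2
    · exact absurd (map_zero _) h

lemma RowsSupportedIn.opMul (hF : RowsSupportedIn N F) (G : ℤ → ℤ → ℂ) :
    RowsSupportedIn N (_root_.opMul F G) := fun x y h => by
  by_contra hx
  exact h (finsum_eq_zero_of_forall_eq_zero fun z => by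
    rw [not_not.mp (mt (hF x z) hx), zero_mul])

lemma trunc_opMul (F : ℤ → ℤ → ℂ) (hG : RowsSupportedIn (2 ^ n) G) :
    trunc (opMul F G) n = trunc F n * trunc G n := by
  ext i j
  exact finsum_eq_sum_fin fun z hz => hG z _ (right_ne_zero_of_mul hz)

lemma trunc_opOne (n : ℕ) : trunc opOne n = 1 := by
  ext i j
  simp [trunc, opOne, Matrix.one_apply, Fin.ext_iff]

lemma trunc_opPow (hG : RowsSupportedIn (2 ^ n) G) : ∀ k : ℕ, trunc (opPow G k) n = trunc G n ^ k
  | 0 => trunc_opOne n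
  | k + 1 => by rw [pow_succ, ← trunc_opPow hG k]; exact trunc_opMul _ hG

lemma trunc_opAdj (F : ℤ → ℤ → ℂ) (n : ℕ) : trunc (opAdj F) n = (trunc F n)ᴴ := rfl

lemma trunc_opCut (F : ℤ → ℤ → ℂ) (n : ℕ) : trunc (opCut (2 ^ n) F) n = trunc F n := by
  ext i j
  exact if_pos ⟨⟨by omega, by exact_mod_cast i.isLt⟩, ⟨by omega, by exact_mod_cast j.isLt⟩⟩

lemma conjTranspose_mul_trunc_pow (A : ℤ → ℤ → ℂ) (n k : ℕ) :
    ((trunc A n)ᴴ * trunc A n) ^ k =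
      trunc (opPow (opMul (opAdj (opCut (2 ^ n) A)) (opCut (2 ^ n) A)) k) n := by
  rw [trunc_opPow ((rowsSupportedIn_opAdj_opCut _ _).opMul _),
    trunc_opMul _ (rowsSupportedIn_opCut _ _), trunc_opAdj, trunc_opCut]

lemma trace_trunc_div (B : ℤ → ℤ → ℂ) (n : ℕ) : trace (trunc B n) / 2 ^ n = opTraceAt B n := rfl

end Truncation

lemma sum_range_mul_of_periodic {g : ℕ → ℂ} {p : ℕ} (hg : Function.Periodic g p) (q : ℕ) :
    ∑ i ∈ range (q * p), g i = q * ∑ i ∈ range p, g i := by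
  induction q with
  | zero => simp
  | succ q ih =>
    have hq : ∀ i, g (q * p + i) = g i := fun i => by
      rw [add_comm]
      simpa using hg.nat_mul q i
    rw [add_one_mul, sum_range_add, ih]
    simp only [hq]
    push_cast
    ring

lemma opTraceAt_eq_of_le {B : ℤ → ℤ → ℂ} {a b : ℕ} (hB : IsShiftInvariantOp (2 ^ a) B)
    (hab : a ≤ b) : opTraceAt B b = opTraceAt B a := by
  have hg : Function.Periodic (fun i : ℕ => B i i) (2 ^ a) := fun i => by
    push_cast
    exact hB i i
  obtain ⟨c, rfl⟩ := Nat.exists_eq_add_of_le hab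
  simp only [opTraceAt, Fin.sum_univ_eq_sum_range (fun i : ℕ => B i i)]
  rw [pow_add, mul_comm (2 ^ a), sum_range_mul_of_periodic hg]
  push_cast
  field_simp
  ring

lemma norm_opTraceAt_sub_le {B B' : ℤ → ℤ → ℂ} {n D : ℕ} {c : ℝ}
    (hc : ∀ x, ‖B x x - B' x x‖ ≤ c) (hD : ∀ x : ℤ, D ≤ x → x + D < 2 ^ n → B x x = B' x x) :
    ‖opTraceAt B n - opTraceAt B' n‖ ≤ 2 * D * c / 2 ^ n := by
  set f : ℕ → ℂ := fun i => B i i - B' i i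
  set bad := range D ∪ Ico (2 ^ n - D) (2 ^ n)
  have hf : ∀ i ∈ range (2 ^ n), f i ≠ 0 → i ∈ bad := fun i hi hne => by
    simp only [bad, mem_union, mem_range, mem_Ico] at hi ⊢
    by_contra h
    have hi' : i + D < 2 ^ n := by omega
    exact hne (sub_eq_zero.mpr (hD i (by omega) (by exact_mod_cast hi')))
  have hcard : #((range (2 ^ n)).filter (· ∈ bad)) ≤ 2 * D := calc
    _ ≤ #bad := card_le_card fun i hi => (mem_filter.mp hi).2
    _ ≤ #(range D) + #(Ico (2 ^ n - D) (2 ^ n)) := card_union_le _ _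
    _ ≤ 2 * D := by rw [card_range, Nat.card_Ico]; omega
  have hsum : ‖∑ i ∈ range (2 ^ n), f i‖ ≤ 2 * D * c := calc
    _ = ‖∑ i ∈ (range (2 ^ n)).filter (· ∈ bad), f i‖ := by rw [sum_filter_of_ne hf]
    _ ≤ #((range (2 ^ n)).filter (· ∈ bad)) • c :=
      (norm_sum_le_of_le (f := f) _ fun i _ => hc i).trans_eq (sum_const c)
    _ ≤ 2 * D * c := by
      rw [nsmul_eq_mul]
      exact mul_le_mul_of_nonneg_right (by exact_mod_cast hcard) ((norm_nonneg _).trans (hc 0))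
  have hdiff : opTraceAt B n - opTraceAt B' n = (∑ i ∈ range (2 ^ n), f i) / 2 ^ n := by
    simp only [opTraceAt, f, ← sub_div, ← sum_sub_distrib,
      Fin.sum_univ_eq_sum_range (fun i : ℕ => B i i - B' i i)]
  rw [hdiff, norm_div, norm_pow, RCLike.norm_ofNat]
  exact div_le_div_of_nonneg_right hsum (by positivity)

lemma norm_trace_pow_div_sub_opTraceAt_le {A : ℤ → ℤ → ℂ} {r : ℕ} {C : ℝ} (hA : IsBandedOp r A)
    (hC : ∀ x y, ‖A x y‖ ≤ C) (k : ℕ) : ∃ K : ℝ, ∀ n : ℕ,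
      ‖trace (((trunc A n)ᴴ * trunc A n) ^ k) / 2 ^ n -
        opTraceAt (opPow (opMul (opAdj A) A) k) n‖ ≤ K / 2 ^ n := by
  have hAdjC : ∀ x y, ‖opAdj A x y‖ ≤ C := fun x y => by
    rw [opAdj, RCLike.norm_conj]
    exact hC y x
  have hCutC : ∀ N x y, ‖opCut N A x y‖ ≤ C := fun N x y => by
    unfold opCut
    split_ifs
    · exact hC x y
    · exact norm_zero.trans_le ((norm_nonneg _).trans (hC x y))
  have hCutAdjC : ∀ N x y, ‖opAdj (opCut N A) x y‖ ≤ C := fun N x y => by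
    rw [opAdj, RCLike.norm_conj]
    exact hCutC N y x
  set E : ℝ := ((2 * (r + r : ℕ) + 1) * ((2 * r + 1) * (C * C))) ^ k
  refine ⟨2 * ((r + r) + (r + r) * k : ℕ) * (E + E), fun n => ?_⟩
  have hCutB := (hA.opCut (2 ^ n)).opAdj.opMul (hA.opCut (2 ^ n))
  rw [conjTranspose_mul_trunc_pow, trace_trunc_div]
  refine norm_opTraceAt_sub_le (fun x => (norm_sub_le _ _).trans (add_le_add ?_ ?_))
    fun x h1 h2 => ?_
  · exact norm_opPow_le hCutB (norm_opMul_le (hCutAdjC _) (hA.opCut _) (hCutC _)) k x x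
  · exact norm_opPow_le (hA.opAdj.opMul hA) (norm_opMul_le hAdjC hA hC) k x x
  · refine opPow_apply_congr hCutB k (fun z hz y => ?_) x
    refine opMul_opAdj_opCut_apply_of_interior hA ?_ y
    have := abs_le.mp hz
    push_cast at *
    omega

theorem stmt15_general (A : ℤ → ℤ → ℂ) (hA : IsPeriodicOp A) (k : ℕ) :
    ∃ c : ℂ,
      (∀ n₀ : ℕ, (∀ x y : ℤ, opPow (opMul (opAdj A) A) k (x + 2 ^ n₀) (y + 2 ^ n₀) =
          opPow (opMul (opAdj A) A) k x y) →
        opTraceAt (opPow (opMul (opAdj A) A) k) n₀ = c) ∧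
      Filter.Tendsto
        (fun n : ℕ => Matrix.trace (((trunc A n)ᴴ * trunc A n) ^ k) / 2 ^ n)
        Filter.atTop (nhds c) := by
  obtain ⟨m, -, hband, hper⟩ := hA
  have hAb : IsBandedOp (2 ^ m) A := fun x y h => hband x y (by exact_mod_cast h)
  have hBk : IsShiftInvariantOp (2 ^ m) (opPow (opMul (opAdj A) A) k) :=
    ((IsShiftInvariantOp.opAdj hper).opMul hper).opPow k
  obtain ⟨C, hC⟩ := hAb.exists_norm_le hper (by positivity)
  obtain ⟨K, hK⟩ := norm_trace_pow_div_sub_opTraceAt_le hAb hC k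
  refine ⟨opTraceAt (opPow (opMul (opAdj A) A) k) m, fun n₀ hn₀ => ?_, ?_⟩
  · exact (opTraceAt_eq_of_le hn₀ (le_max_right m n₀)).symm.trans
      (opTraceAt_eq_of_le hBk (le_max_left m n₀))
  · refine tendsto_iff_norm_sub_tendsto_zero.mpr <| squeeze_zero' (g := fun n => K / 2 ^ n)
      (.of_forall fun _ => norm_nonneg _) ?_
      (tendsto_const_nhds.div_atTop (tendsto_pow_atTop_atTop_of_one_lt one_lt_two))
    filter_upwards [eventually_ge_atTop m] with n hn
    rw [← opTraceAt_eq_of_le hBk hn]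
    exact hK n

/-- for every periodic operator `A` and every `k ≥ 1`,
`lim_n 2^{−n}·Tr(((A_n)ᴴ A_n)^k) = t((A*A)^k)`, where `t(B) = 2^{−n₀} ∑_{i<2^n₀} B(i,i)`
for any `n₀` such that `2^{n₀}` is a period of `B` (the value is independent of the
choice of such `n₀`). -/
theorem stmt15 (A : ℤ → ℤ → ℂ) (hA : IsPeriodicOp A) (k : ℕ) (hk : 1 ≤ k) :
    ∃ c : ℂ,
      (∀ n₀ : ℕ, (∀ x y : ℤ, opPow (opMul (opAdj A) A) k (x + 2 ^ n₀) (y + 2 ^ n₀) =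
          opPow (opMul (opAdj A) A) k x y) →
        opTraceAt (opPow (opMul (opAdj A) A) k) n₀ = c) ∧
      Filter.Tendsto
        (fun n : ℕ => Matrix.trace (((trunc A n)ᴴ * trunc A n) ^ k) / 2 ^ n)
        Filter.atTop (nhds c) :=
  stmt15_general A hA k
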